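/- For every integer d ≥ 2, in the circular-arc construction with n = d² the following holds: for any two distinct arcs r, r' ∈ R, at least one of the two arcs contains an integral subarc of length d − 2 that is disjoint from the other arc. -/

import Mathlib

/-- `x` modulo `m`, for real numbers. -/
noncomputable def rmod (x m : ℝ) : ℝ := x - m * ⌊x / m⌋

/-- The circumference `n = d²` of the circle of the construction. -/
def circum (d : ℕ) : ℝ := (d : ℝ) ^ 2

/-- The real representative `i·d + j` of the integer point `(i,j)_d`. -/
def ipt (d i j : ℕ) : ℝ := (i : ℝ) * d + j

/-- The arc `[a,b]` of the circle of circumference `m`, where `a, b` are the images of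
the reals `x, y`: the image of the interval `[x, x + ((y − x) mod m)]`. -/
noncomputable def arcCC (m x y : ℝ) : Set (AddCircle m) :=
  (fun t : ℝ => (t : AddCircle m)) '' Set.Icc x (x + rmod (y - x) m)

/-- The length of the arc `[a,b]`, namely `(y − x) mod m`. -/
noncomputable def arcLen (m x y : ℝ) : ℝ := rmod (y - x) m

/-- Indices `(i,j)`, `0 ≤ i,j < d`, `i ≠ j`, of the arcs `[(i,j)_d, (j,i)_d]` of the
construction having length at most `n/4`. -/
noncomputable def RIdx (d : ℕ) : Set (ℕ × ℕ) :=
  {q | q.1 < d ∧ q.2 < d ∧ q.1 ≠ q.2 ∧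
    arcLen (circum d) (ipt d q.1 q.2) (ipt d q.2 q.1) ≤ circum d / 4}

/-- The arc `[(i,j)_d, (j,i)_d]` indexed by `q = (i,j)`. -/
noncomputable def arcR (d : ℕ) (q : ℕ × ℕ) : Set (AddCircle (circum d)) :=
  arcCC (circum d) (ipt d q.1 q.2) (ipt d q.2 q.1)

/-- The set of starting points of arcs in `R`. -/
noncomputable def startPts (d : ℕ) : Set (AddCircle (circum d)) :=
  {p | ∃ q ∈ RIdx d, p = ((ipt d q.1 q.2 : ℝ) : AddCircle (circum d))}

/-- The set of ending points of arcs in `R`. -/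
noncomputable def endPts (d : ℕ) : Set (AddCircle (circum d)) :=
  {p | ∃ q ∈ RIdx d, p = ((ipt d q.2 q.1 : ℝ) : AddCircle (circum d))}

/-- The intersection graph `G_R` of the arcs of the construction. -/
noncomputable def GR (d : ℕ) : SimpleGraph (RIdx d) where
  Adj q q' := q ≠ q' ∧ (arcR d q ∩ arcR d q').Nonempty
  symm := by
    constructor
    rintro q q' ⟨h1, h2⟩
    exact ⟨h1.symm, by rwa [Set.inter_comm]⟩
  loopless := ⟨fun q h => h.1 rfl⟩

/-! The candidates are the four integral segments of length `d − 2` at the ends of the arcs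
`r = [(i,j)_d, (j,i)_d]` and `r'`. Arcs of `R` have length at least `d − 1`, so each candidate lies
in its own arc. As both arcs have length at most `n/4`, the candidate at the start of `r'` misses
`r` or the one at the start of `r` misses `r'`, unless the two starting points are within `d − 2`
of each other on the circle; likewise for the ending points. If both pairs are that close, then
with `(u, v) = (i' − i, j' − j)` both `u·d + v` and `v·d + u` are congruent modulo `d²` to numbers
of absolute value at most `d − 2`; reading off base-`d` digits, this forces `u = v = 0`, or
`u = v = ±(d − 1)`, which would mean `i = j`. -/

section Arcs

variable {m : ℝ}

lemma rmod_eq_toIcoMod (hm : 0 < m) (x : ℝ) : rmod x m = toIcoMod hm 0 x := by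
  rw [toIcoMod, toIcoDiv_eq_floor, rmod, sub_zero, zsmul_eq_mul, mul_comm]

lemma rmod_mem_Ico (hm : 0 < m) (x : ℝ) : rmod x m ∈ Set.Ico 0 m := by
  rw [rmod_eq_toIcoMod hm]
  exact toIcoMod_mem_Ico' hm x

lemma rmod_intCast {N : ℤ} (hN : 0 < N) (z : ℤ) : rmod z N = ((z % N : ℤ) : ℝ) := by
  rw [rmod_eq_toIcoMod (Int.cast_pos.2 hN), toIcoMod_eq_iff, zero_add]
  refine ⟨⟨?_, ?_⟩, z / N, ?_⟩
  · exact_mod_cast Int.emod_nonneg z hN.ne'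
  · exact_mod_cast Int.emod_lt_of_pos z hN
  · rw [zsmul_eq_mul]
    norm_cast
    linarith [Int.emod_add_mul_ediv z N]

lemma coe_add_rmod_sub (a x u : ℝ) :
    ((a + rmod (x - a) m + u : ℝ) : AddCircle m) = ((x + u : ℝ) : AddCircle m) := by
  rw [rmod, show a + (x - a - m * ⌊(x - a) / m⌋) + u = x + u + (-⌊(x - a) / m⌋) • m by
    rw [zsmul_eq_mul]; push_cast; ring]
  exact QuotientAddGroup.mk_add_of_mem _ (AddSubgroup.zsmul_mem_zmultiples _ _)

lemma arcCC_subset_arcCC (hm : 0 < m) {x y a b : ℝ}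
    (h : rmod (x - a) m + rmod (y - x) m ≤ rmod (b - a) m) : arcCC m x y ⊆ arcCC m a b := by
  rintro _ ⟨s, hs, rfl⟩
  have hxa := (rmod_mem_Ico hm (x - a)).1
  refine ⟨a + rmod (x - a) m + (s - x), ⟨by linarith [hs.1], by linarith [hs.2]⟩, ?_⟩
  dsimp only
  rw [coe_add_rmod_sub, add_sub_cancel]

lemma disjoint_arcCC (hm : 0 < m) {x y a b : ℝ} (hout : rmod (b - a) m < rmod (x - a) m)
    (hfit : rmod (x - a) m + rmod (y - x) m < m) : Disjoint (arcCC m x y) (arcCC m a b) := by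
  have := Fact.mk hm
  rw [Set.disjoint_left]
  rintro _ ⟨s, hs, rfl⟩ ⟨t, ht, hts⟩
  have hba := rmod_mem_Ico hm (b - a)
  have hxa := (rmod_mem_Ico hm (x - a)).1
  dsimp only at hts
  -- `t` and the translate `a + rmod (x - a) m + (s - x)` of `s` both lie in `[a, a + m)`
  rw [← add_sub_cancel x s, ← coe_add_rmod_sub (a := a),
    AddCircle.coe_eq_coe_iff_of_mem_Ico (a := a)] at hts
  · linarith [hs.1, ht.2]
  · exact ⟨ht.1, by linarith [ht.2, hba.2]⟩
  · exact ⟨by linarith [hs.1], by linarith [hs.2]⟩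

end Arcs

namespace Int

variable {N c : ℤ}

lemma emod_eq_of_modEq {z r : ℤ} (h : z ≡ r [ZMOD N]) (hr0 : 0 ≤ r) (hrN : r < N) :
    z % N = r :=
  Eq.trans h (emod_eq_of_lt hr0 hrN)

lemma modEq_emod_sub (z : ℤ) : z ≡ z % N - N [ZMOD N] :=
  modEq_iff_dvd.2 ⟨-1 - z / N, by linarith [emod_add_mul_ediv z N]⟩

lemma le_emod_of_le_abs {z : ℤ} (hc : 0 < c) (hcz : c ≤ |z|) (hzN : |z| ≤ N - c) :
    c ≤ z % N := by
  rcases le_or_gt 0 z with hz | hz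
  · rw [abs_of_nonneg hz] at hcz hzN
    rwa [emod_eq_of_lt hz (by linarith)]
  · rw [abs_of_neg hz] at hcz hzN
    rw [emod_eq_of_modEq (r := z + N) (modEq_iff_dvd.2 ⟨1, by ring⟩) (by linarith)
      (by linarith)]
    linarith

lemma digits_of_mul_add_modEq_sq {D u v s : ℤ} (hu : |u| < D) (hv : |v| < D)
    (hs : |s| ≤ D - 2) (h : u * D + v ≡ s [ZMOD D ^ 2]) :
    (u = 0 ∧ v = s) ∨ ((u = -1 ∨ u = D - 1) ∧ v = s + D) ∨
      ((u = 1 ∨ u = 1 - D) ∧ v = s - D) := by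
  rw [abs_lt] at hu hv
  rw [abs_le] at hs
  have hD : 0 < D := by linarith
  obtain ⟨k, hk⟩ := modEq_iff_dvd.1 h.symm
  obtain ⟨e, he⟩ : ∃ e, v - s = D * e := ⟨D * k - u, by linear_combination hk⟩
  have hek : u + e = D * k := by
    apply mul_left_cancel₀ hD.ne'
    linear_combination hk - he
  have he1 : -2 < e := lt_of_mul_lt_mul_left (by linarith : D * -2 < D * e) hD.le
  have he2 : e < 2 := lt_of_mul_lt_mul_left (by linarith : D * e < D * 2) hD.le
  have hk1 : -2 < k := lt_of_mul_lt_mul_left (by linarith : D * -2 < D * k) hD.le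
  have hk2 : k < 2 := lt_of_mul_lt_mul_left (by linarith : D * k < D * 2) hD.le
  interval_cases e <;> interval_cases k <;> omega

end Int

section CyclicSegments

variable {N c : ℤ}

def IsNear (N c z : ℤ) : Prop := ∃ s, |s| ≤ c ∧ z ≡ s [ZMOD N]

/-- The segment `[x, x + c]` of `ℤ / N` lies in the arc `[a, b]` and misses the arc `[a', b']`;
here `(y - a) % N` is the position of `y` along the arc starting at `a`. -/
def IsPrivateSeg (N c x a b a' b' : ℤ) : Prop :=
  (x - a) % N + c ≤ (b - a) % N ∧ (b' - a') % N < (x - a') % N ∧ (x - a') % N + c < N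

lemma emod_mem_Ioo_or_neg_emod_mem_Ioo_or_isNear (hN : 0 < N) (hc : 0 ≤ c) {L L' : ℤ}
    (hLL' : L + L' < N) (z : ℤ) :
    z % N ∈ Set.Ioo L (N - c) ∨ (-z) % N ∈ Set.Ioo L' (N - c) ∨ IsNear N c z := by
  have h0 := Int.emod_nonneg z hN.ne'
  have hN' := Int.emod_lt_of_pos z hN
  by_cases hsmall : z % N ≤ c
  · exact .inr (.inr ⟨z % N, abs_le.2 ⟨by linarith, hsmall⟩, (Int.mod_modEq z N).symm⟩)
  by_cases hlarge : N - c ≤ z % N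
  · exact .inr (.inr ⟨z % N - N, abs_le.2 ⟨by linarith, by linarith⟩, Int.modEq_emod_sub z⟩)
  by_cases hout : L < z % N
  · exact .inl ⟨hout, by linarith⟩
  have hneg : (-z) % N = N - z % N :=
    Int.emod_eq_of_modEq (by simpa only [neg_sub] using (Int.modEq_emod_sub z).neg)
      (by linarith) (by linarith)
  exact .inr (.inl ⟨by linarith, by linarith⟩)

variable {a b a' b' : ℤ}

lemma isPrivateSeg_start (hcL' : c ≤ (b' - a') % N)
    (h : (a' - a) % N ∈ Set.Ioo ((b - a) % N) (N - c)) : IsPrivateSeg N c a' a' b' a b :=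
  ⟨by simpa using hcL', h.1, by linarith [h.2]⟩

lemma isPrivateSeg_end (hN : 0 < N) (hc : 0 ≤ c) (hcL' : c ≤ (b' - a') % N)
    (h : (b - b') % N ∈ Set.Ioo ((b - a) % N) (N - c)) :
    IsPrivateSeg N c (b' - c) a' b' a b := by
  obtain ⟨hout, hfit⟩ := h
  have hL' : (b' - c - a') % N = (b' - a') % N - c := by
    refine Int.emod_eq_of_modEq ?_ (by linarith) (by linarith [Int.emod_lt_of_pos (b' - a') hN])
    rw [sub_right_comm]
    exact (Int.mod_modEq _ _).symm.sub_right c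
  have hL : (b' - c - a) % N = N + (b - a) % N - (b - b') % N - c := by
    refine Int.emod_eq_of_modEq (Int.modEq_iff_dvd.2 ⟨1 - (b - a) / N + (b - b') / N, ?_⟩)
      (by linarith [Int.emod_nonneg (b - a) hN.ne']) (by linarith)
    linarith [Int.emod_add_mul_ediv (b - a) N, Int.emod_add_mul_ediv (b - b') N]
  refine ⟨by linarith, ?_, ?_⟩ <;> rw [hL] <;> linarith

lemma exists_isPrivateSeg_or_isNear (hN : 0 < N) (hc : 0 ≤ c)
    (hcL : c ≤ (b - a) % N) (hcL' : c ≤ (b' - a') % N)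
    (hLL' : (b - a) % N + (b' - a') % N < N) :
    (∃ x, IsPrivateSeg N c x a b a' b' ∨ IsPrivateSeg N c x a' b' a b) ∨
      IsNear N c (a' - a) ∧ IsNear N c (b - b') := by
  rcases emod_mem_Ioo_or_neg_emod_mem_Ioo_or_isNear hN hc hLL' (a' - a) with h | h | hstart
  · exact .inl ⟨a', .inr (isPrivateSeg_start hcL' h)⟩
  · rw [neg_sub] at h
    exact .inl ⟨a, .inl (isPrivateSeg_start hcL h)⟩
  rcases emod_mem_Ioo_or_neg_emod_mem_Ioo_or_isNear hN hc hLL' (b - b') with h | h | hend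
  · exact .inl ⟨b' - c, .inr (isPrivateSeg_end hN hc hcL' h)⟩
  · rw [neg_sub] at h
    exact .inl ⟨b - c, .inl (isPrivateSeg_end hN hc hcL h)⟩
  exact .inr ⟨hstart, hend⟩

lemma IsPrivateSeg.subset_and_disjoint {x : ℤ} (hN : 0 < N) (hc : 0 ≤ c) (hcN : c < N)
    (h : IsPrivateSeg N c x a b a' b') :
    arcCC N x (x + c) ⊆ arcCC N a b ∧ Disjoint (arcCC N x (x + c)) (arcCC N a' b') := by
  have hN' : (0 : ℝ) < N := by exact_mod_cast hN
  have hcast : ∀ u v : ℤ, rmod ((u : ℝ) - v) N = (((u - v) % N : ℤ) : ℝ) := fun u v => by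
    rw [← Int.cast_sub, rmod_intCast hN]
  have hlen : rmod ((x : ℝ) + c - x) N = c := by
    rw [add_sub_cancel_left, rmod_intCast hN, Int.emod_eq_of_lt hc hcN]
  obtain ⟨hin, hout, hfit⟩ := h
  refine ⟨arcCC_subset_arcCC hN' ?_, disjoint_arcCC hN' ?_ ?_⟩
  · rw [hcast, hlen, hcast]; exact_mod_cast hin
  · rw [hcast, hcast]; exact_mod_cast hout
  · rw [hcast, hlen]; exact_mod_cast hfit

end CyclicSegments

section Construction

def pt (d i j : ℕ) : ℤ := i * d + j

lemma ipt_eq_pt (d i j : ℕ) : ipt d i j = pt d i j := by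
  simp [ipt, pt]

lemma circum_eq (d : ℕ) : circum d = (((d : ℤ) ^ 2 : ℤ) : ℝ) := by
  simp [circum]

variable {d : ℕ} {q q' : ℕ × ℕ}

lemma length_bounds_of_mem_RIdx (hd : 2 ≤ d) (hq : q ∈ RIdx d) :
    (d : ℤ) - 2 ≤ (pt d q.2 q.1 - pt d q.1 q.2) % d ^ 2 ∧
      4 * ((pt d q.2 q.1 - pt d q.1 q.2) % d ^ 2) ≤ d ^ 2 := by
  obtain ⟨hi, hj, hij, hlen⟩ := hq
  have hN : (0 : ℤ) < d ^ 2 := by positivity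
  constructor
  · have hdiff : |pt d q.2 q.1 - pt d q.1 q.2| = |(q.2 : ℤ) - q.1| * (d - 1) := by
      rw [← abs_of_pos (by omega : (0 : ℤ) < d - 1), ← abs_mul]
      congr 1
      simp only [pt]
      ring
    have hji : 1 ≤ |(q.2 : ℤ) - q.1| ∧ |(q.2 : ℤ) - q.1| ≤ d - 1 :=
      ⟨Int.one_le_abs (sub_ne_zero.2 (by exact_mod_cast Ne.symm hij)),
        abs_le.2 ⟨by omega, by omega⟩⟩
    have := Int.le_emod_of_le_abs (N := (d : ℤ) ^ 2) (c := d - 1) (by omega)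
      (by rw [hdiff]; nlinarith) (by rw [hdiff]; nlinarith)
    linarith
  · rw [arcLen, ipt_eq_pt, ipt_eq_pt, circum_eq, ← Int.cast_sub, rmod_intCast hN] at hlen
    have : (((4 * ((pt d q.2 q.1 - pt d q.1 q.2) % d ^ 2)) : ℤ) : ℝ) ≤ ((d ^ 2 : ℤ) : ℝ) := by
      push_cast at hlen ⊢; linarith
    exact_mod_cast this

lemma IsPrivateSeg.arcR_subset_and_disjoint (hd : 2 ≤ d) {x : ℤ}
    (h : IsPrivateSeg (d ^ 2) (d - 2) x (pt d q.1 q.2) (pt d q.2 q.1) (pt d q'.1 q'.2)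
      (pt d q'.2 q'.1)) :
    arcCC (circum d) x (x + ((d : ℝ) - 2)) ⊆ arcR d q ∧
      Disjoint (arcCC (circum d) x (x + ((d : ℝ) - 2))) (arcR d q') := by
  have := h.subset_and_disjoint (by positivity) (by omega) (by nlinarith)
  simp only [arcR, ipt_eq_pt]
  rw [circum_eq]
  simpa only [Int.cast_sub, Int.cast_natCast, Int.cast_ofNat] using this

lemma eq_of_isNear_of_isNear (hq : q.1 < d ∧ q.2 < d ∧ q.1 ≠ q.2)
    (hq' : q'.1 < d ∧ q'.2 < d)
    (hstart : IsNear (d ^ 2) (d - 2) (pt d q'.1 q'.2 - pt d q.1 q.2))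
    (hend : IsNear (d ^ 2) (d - 2) (pt d q.2 q.1 - pt d q'.2 q'.1)) : q = q' := by
  obtain ⟨i, j⟩ := q
  obtain ⟨i', j'⟩ := q'
  obtain ⟨hi, hj, hij⟩ := hq
  obtain ⟨hi', hj'⟩ := hq'
  obtain ⟨s, hs, hstart⟩ := hstart
  obtain ⟨t, ht, hend⟩ := hend
  simp only [pt] at hstart hend
  have hu : |(i' - i : ℤ)| < d := abs_lt.2 ⟨by omega, by omega⟩
  have hv : |(j' - j : ℤ)| < d := abs_lt.2 ⟨by omega, by omega⟩
  have h1 := Int.digits_of_mul_add_modEq_sq hu hv hs (by convert hstart using 1; ring)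
  have h2 := Int.digits_of_mul_add_modEq_sq hv hu (by rwa [abs_neg])
    (by convert hend.neg using 1; ring)
  rw [abs_le] at hs ht
  ext <;> simp only <;> omega

end Construction

/-- for every `d ≥ 2` and any two distinct arcs `r, r'` of the
construction `R`, one of the two arcs contains an integral subarc of length `d − 2`
disjoint from the other arc. -/
theorem exists_long_private_subarc (d : ℕ) (hd : 2 ≤ d)
    (q q' : ℕ × ℕ) (hq : q ∈ RIdx d) (hq' : q' ∈ RIdx d) (hne : q ≠ q') :
    ∃ x : ℤ,
      (arcCC (circum d) (x : ℝ) ((x : ℝ) + ((d : ℝ) - 2)) ⊆ arcR d q ∧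
        Disjoint (arcCC (circum d) (x : ℝ) ((x : ℝ) + ((d : ℝ) - 2))) (arcR d q')) ∨
      (arcCC (circum d) (x : ℝ) ((x : ℝ) + ((d : ℝ) - 2)) ⊆ arcR d q' ∧
        Disjoint (arcCC (circum d) (x : ℝ) ((x : ℝ) + ((d : ℝ) - 2))) (arcR d q)) := by
  obtain ⟨hcL, h4L⟩ := length_bounds_of_mem_RIdx hd hq
  obtain ⟨hcL', h4L'⟩ := length_bounds_of_mem_RIdx hd hq'
  have hN : (0 : ℤ) < d ^ 2 := by positivity
  rcases exists_isPrivateSeg_or_isNear hN (by omega) hcL hcL' (by linarith) with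
    ⟨x, hx | hx⟩ | ⟨hstart, hend⟩
  · exact ⟨x, .inl (hx.arcR_subset_and_disjoint hd)⟩
  · exact ⟨x, .inr (hx.arcR_subset_and_disjoint hd)⟩
  · exact absurd (eq_of_isNear_of_isNear ⟨hq.1, hq.2.1, hq.2.2.1⟩ ⟨hq'.1, hq'.2.1⟩ hstart hend)
      hne
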